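/- For every odd positive integer n, the sum over k from 0 to n of binomial(n,k)*binomial(n+k,k)*binomial(2k,k) / ((-4)^k * (k+1)^3) equals -2/(n(n+1)) + ((4n^4+8n^3+3n^2-n+1)/(n(n+1)^3)) * binomial(n-1,(n-1)/2)^2 / 16^((n-1)/2) (as rational numbers). -/

import Mathlib

/-!
Creative telescoping: with Zeilberger's certificate, the sums `S n` satisfy
`n³(n+2) S n + (2n+3)(3n²+9n+5) S (n+1) - (n+1)(n+3)³ S (n+2) = -2(2n+3)`.
The leading coefficient never vanishes, so `S` is determined by `S 1 = 7/8` and `S 2 = 17/24`.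
The odd closed form and its even companion
`S n = -2/(n(n+1)) + (2n+1)²/(n(n+1)) · (binom(n, n/2)/2ⁿ)²` satisfy the same recurrence,
because `binom(2m+2, m+1)/4^(m+1) = binom(2m, m)/4^m · (2m+1)/(2m+2)`.
-/

open Finset

section CastChoose

variable {R : Type*} [CommRing R]

theorem cast_choose_mul_succ_eq (n k : ℕ) :
    (n.choose k : R) * (n + 1) = ((n + 1).choose k : R) * (n + 1 - k) := by
  rcases le_or_gt k (n + 1) with h | h
  · have := congrArg (Nat.cast (R := R)) (Nat.choose_mul_succ_eq n k)
    push_cast [Nat.cast_sub h] at this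
    exact this
  · simp [Nat.choose_eq_zero_of_lt h, Nat.choose_eq_zero_of_lt (Nat.lt_of_succ_lt h)]

theorem cast_choose_succ_right_eq (n k : ℕ) :
    (n.choose (k + 1) : R) * (k + 1) = (n.choose k : R) * (n - k) := by
  rcases le_or_gt k n with h | h
  · have := congrArg (Nat.cast (R := R)) (Nat.choose_succ_right_eq n k)
    push_cast [Nat.cast_sub h] at this
    exact this
  · simp [Nat.choose_eq_zero_of_lt h, Nat.choose_eq_zero_of_lt (Nat.lt_succ_of_lt h)]

theorem cast_centralBinom_succ_mul (k : ℕ) :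
    ((2 * (k + 1)).choose (k + 1) : R) * (k + 1) = 2 * (2 * k + 1) * ((2 * k).choose k : R) := by
  have := congrArg (Nat.cast (R := R)) (Nat.succ_mul_centralBinom_succ k)
  push_cast [Nat.centralBinom] at this
  linear_combination this

end CastChoose

def summand (n k : ℕ) : ℚ :=
  (n.choose k * (n + k).choose k * (2 * k).choose k : ℚ) / ((-4) ^ k * (k + 1) ^ 3)

def summandSum (n : ℕ) : ℚ := ∑ k ∈ range (n + 1), summand n k

/-- Zeilberger's certificate for the order-two recurrence of `summandSum`. -/
def certificate (n k : ℕ) : ℚ :=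
  ((n + 2).choose k * (n + k).choose k * (2 * k).choose k : ℚ)
    / ((-4) ^ k * ((n : ℚ) + 1) * ((n : ℚ) + 2))

-- Every term of the recurrence is `certificate n k` times a rational function of `n` and `k`.
section RatiosToCertificate

variable (n k : ℕ)

theorem summand_eq_certificate_mul :
    summand n k = certificate n k * ((n + 1 - k) * (n + 2 - k) / (k + 1) ^ 3) := by
  have h0 := cast_choose_mul_succ_eq (R := ℚ) n k
  have h1 := cast_choose_mul_succ_eq (R := ℚ) (n + 1) k
  push_cast at h1
  have top : (n.choose k : ℚ)
      = ((n + 2).choose k : ℚ) * (n + 1 - k) * (n + 2 - k) / ((n + 1) * (n + 2)) := by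
    field_simp
    linear_combination (n + 2 : ℚ) * h0 + (n + 1 - k : ℚ) * h1
  rw [summand, certificate, top]
  field_simp

theorem summand_succ_eq_certificate_mul :
    summand (n + 1) k = certificate n k * ((n + 2 - k) * (n + 1 + k) / (k + 1) ^ 3) := by
  have h1 := cast_choose_mul_succ_eq (R := ℚ) (n + 1) k
  have h2 := cast_choose_mul_succ_eq (R := ℚ) (n + k) k
  rw [show n + k + 1 = n + 1 + k by omega] at h2
  push_cast at h1 h2
  have top : ((n + 1).choose k : ℚ) = ((n + 2).choose k : ℚ) * (n + 2 - k) / (n + 2) := by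
    field_simp
    linear_combination h1
  have mid : ((n + 1 + k).choose k : ℚ) = (n + 1 + k) * ((n + k).choose k : ℚ) / (n + 1) := by
    field_simp
    linear_combination -h2
  rw [summand, certificate, top, mid]
  field_simp

theorem summand_add_two_eq_certificate_mul :
    summand (n + 2) k = certificate n k * ((n + 1 + k) * (n + 2 + k) / (k + 1) ^ 3) := by
  have h1 := cast_choose_mul_succ_eq (R := ℚ) (n + k) k
  have h2 := cast_choose_mul_succ_eq (R := ℚ) (n + 1 + k) k
  rw [show n + k + 1 = n + 1 + k by omega] at h1
  rw [show n + 1 + k + 1 = n + 2 + k by omega] at h2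
  push_cast at h1 h2
  have mid : ((n + 2 + k).choose k : ℚ)
      = (n + 1 + k) * (n + 2 + k) * ((n + k).choose k : ℚ) / ((n + 1) * (n + 2)) := by
    field_simp
    linear_combination -(n + 2 + k : ℚ) * h1 - (n + 1 : ℚ) * h2
  rw [summand, certificate, mid]
  field_simp

theorem certificate_succ :
    certificate n (k + 1)
      = certificate n k * (-((n + 2 - k) * (n + 1 + k) * (2 * k + 1)) / (2 * (k + 1) ^ 3)) := by
  have hk : (k : ℚ) + 1 ≠ 0 := by positivity
  have top : ((n + 2).choose (k + 1) : ℚ) = ((n + 2).choose k : ℚ) * (n + 2 - k) / (k + 1) := by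
    refine eq_div_of_mul_eq hk ?_
    simpa using cast_choose_succ_right_eq (R := ℚ) (n + 2) k
  have mid : ((n + k + 1).choose (k + 1) : ℚ)
      = (n + k + 1) * ((n + k).choose k : ℚ) / (k + 1) := by
    refine eq_div_of_mul_eq hk ?_
    simpa using (congrArg (Nat.cast (R := ℚ)) (Nat.add_one_mul_choose_eq (n + k) k)).symm
  have central : ((2 * (k + 1)).choose (k + 1) : ℚ)
      = 2 * (2 * k + 1) * ((2 * k).choose k : ℚ) / (k + 1) :=
    eq_div_of_mul_eq hk (cast_centralBinom_succ_mul k)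
  rw [certificate, certificate, show n + (k + 1) = n + k + 1 by omega, top, mid, central]
  field_simp
  ring

theorem summand_telescope :
    (n : ℚ) ^ 3 * (n + 2) * summand n k
      + (2 * n + 3) * (3 * n ^ 2 + 9 * n + 5) * summand (n + 1) k
      - (n + 1) * (n + 3) ^ 3 * summand (n + 2) k
    = 2 * (2 * n + 3) * (n + 1) * (n + 2) * (certificate n (k + 1) - certificate n k) := by
  rw [summand_eq_certificate_mul, summand_succ_eq_certificate_mul,
    summand_add_two_eq_certificate_mul, certificate_succ]
  field_simp
  ring

end RatiosToCertificate

theorem summandSum_recurrence (n : ℕ) :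
    (n : ℚ) ^ 3 * (n + 2) * summandSum n
      + (2 * n + 3) * (3 * n ^ 2 + 9 * n + 5) * summandSum (n + 1)
      - (n + 1) * (n + 3) ^ 3 * summandSum (n + 2)
    = -2 * (2 * n + 3) := by
  have summand_eq_zero {n k : ℕ} (h : n < k) : summand n k = 0 := by
    simp [summand, Nat.choose_eq_zero_of_lt h]
  have sum0 : ∑ k ∈ range (n + 3), summand n k = summandSum n := by
    rw [sum_range_succ, sum_range_succ, summand_eq_zero (by omega), summand_eq_zero (by omega)]
    simp [summandSum]
  have sum1 : ∑ k ∈ range (n + 3), summand (n + 1) k = summandSum (n + 1) := by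
    rw [sum_range_succ, summand_eq_zero (by omega)]
    simp [summandSum]
  have telescoped := sum_congr rfl fun k (_ : k ∈ range (n + 3)) => summand_telescope n k
  rw [sum_sub_distrib, sum_add_distrib, ← mul_sum, ← mul_sum, ← mul_sum, ← mul_sum,
    sum_range_sub (certificate n), sum0, sum1] at telescoped
  change _ - _ * summandSum (n + 2) = _ at telescoped
  have cert_zero : certificate n 0 = 1 / ((n + 1) * (n + 2)) := by simp [certificate]
  have cert_top : certificate n (n + 3) = 0 := by simp [certificate]
  rw [cert_zero, cert_top] at telescoped
  rw [telescoped]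
  field_simp
  ring

def recurrenceStep (x a b : ℚ) : ℚ :=
  (x ^ 3 * (x + 2) * a + (2 * x + 3) * (3 * x ^ 2 + 9 * x + 5) * b + 2 * (2 * x + 3))
    / ((x + 1) * (x + 3) ^ 3)

theorem summandSum_add_two (n : ℕ) :
    summandSum (n + 2) = recurrenceStep n (summandSum n) (summandSum (n + 1)) := by
  rw [recurrenceStep, eq_div_iff (by positivity)]
  linear_combination -summandSum_recurrence n

-- The closed forms of `summandSum x` for odd and even `x`, with `c = normCentralBinom (x / 2)`.
def oddValue (x c : ℚ) : ℚ :=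
  -2 / (x * (x + 1)) + (4 * x ^ 4 + 8 * x ^ 3 + 3 * x ^ 2 - x + 1) / (x * (x + 1) ^ 3) * c ^ 2

def evenValue (x c : ℚ) : ℚ :=
  -2 / (x * (x + 1)) + (2 * x + 1) ^ 2 / (x * (x + 1)) * c ^ 2

theorem recurrenceStep_oddValue {x : ℚ} (hx : 0 < x) (c : ℚ) :
    recurrenceStep x (oddValue x c) (evenValue (x + 1) (c * x / (x + 1)))
      = oddValue (x + 2) (c * x / (x + 1)) := by
  unfold recurrenceStep oddValue evenValue
  field_simp
  ring

theorem recurrenceStep_evenValue {x : ℚ} (hx : 0 < x) (c : ℚ) :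
    recurrenceStep x (evenValue x c) (oddValue (x + 1) c)
      = evenValue (x + 2) (c * (x + 1) / (x + 2)) := by
  unfold recurrenceStep oddValue evenValue
  field_simp
  ring

def normCentralBinom (m : ℕ) : ℚ := m.centralBinom / 4 ^ m

theorem normCentralBinom_succ (m : ℕ) :
    normCentralBinom (m + 1) = normCentralBinom m * (2 * m + 1) / (2 * m + 2) := by
  have := cast_centralBinom_succ_mul (R := ℚ) m
  rw [← Nat.centralBinom, ← Nat.centralBinom] at this
  simp only [normCentralBinom, pow_succ]
  field_simp
  linear_combination 2 * this

theorem summandSum_odd_even (m : ℕ) :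
    summandSum (2 * m + 1) = oddValue (2 * m + 1) (normCentralBinom m)
      ∧ summandSum (2 * m + 2) = evenValue (2 * m + 2) (normCentralBinom (m + 1)) := by
  induction m with
  | zero =>
    constructor <;> norm_num [summandSum, summand, sum_range_succ, oddValue, evenValue,
      normCentralBinom, Nat.centralBinom, Nat.choose]
  | succ m ih =>
    have odd_step : summandSum (2 * (m + 1) + 1)
        = oddValue (2 * ((m + 1 : ℕ) : ℚ) + 1) (normCentralBinom (m + 1)) := by
      have := recurrenceStep_oddValue (x := 2 * m + 1) (by positivity) (normCentralBinom m)
      rw [show 2 * (m + 1) + 1 = 2 * m + 1 + 2 by ring, summandSum_add_two, ih.1, ih.2,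
        normCentralBinom_succ]
      push_cast
      convert this using 2 <;> ring_nf
    refine ⟨odd_step, ?_⟩
    have := recurrenceStep_evenValue (x := 2 * m + 2) (by positivity) (normCentralBinom (m + 1))
    rw [show 2 * (m + 1) + 2 = 2 * m + 2 + 2 by ring, summandSum_add_two, ih.2,
      show 2 * m + 2 + 1 = 2 * (m + 1) + 1 by ring, odd_step,
      normCentralBinom_succ (m + 1)]
    push_cast
    convert this using 2 <;> ring_nf

theorem id3_odd_general (n : ℕ) (hn : Odd n) :
    ∑ k ∈ Finset.range (n + 1),
        (Nat.choose n k * Nat.choose (n + k) k * Nat.choose (2 * k) k : ℚ)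
          / ((-4) ^ k * (k + 1) ^ 3)
      = -2 / ((n : ℚ) * (n + 1))
          + ((4 * (n : ℚ) ^ 4 + 8 * (n : ℚ) ^ 3 + 3 * (n : ℚ) ^ 2 - n + 1)
                / ((n : ℚ) * (n + 1) ^ 3))
              * (Nat.choose (n - 1) ((n - 1) / 2) : ℚ) ^ 2 / 16 ^ ((n - 1) / 2) := by
  obtain ⟨m, rfl⟩ := hn
  have closed_form := (summandSum_odd_even m).1
  simp only [summandSum, summand, oddValue, normCentralBinom] at closed_form
  rw [show 2 * m + 1 - 1 = 2 * m by omega, show 2 * m / 2 = m by omega, closed_form,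
    ← Nat.centralBinom,
    show (16 : ℚ) ^ m = (4 ^ m) ^ 2 by rw [← pow_mul, mul_comm, pow_mul]; norm_num]
  push_cast
  ring

theorem id3_odd (n : ℕ) (hn : Odd n) (hn0 : 0 < n) :
    ∑ k ∈ Finset.range (n + 1),
        (Nat.choose n k * Nat.choose (n + k) k * Nat.choose (2 * k) k : ℚ)
          / ((-4) ^ k * (k + 1) ^ 3)
      = -2 / ((n : ℚ) * (n + 1))
          + ((4 * (n : ℚ) ^ 4 + 8 * (n : ℚ) ^ 3 + 3 * (n : ℚ) ^ 2 - n + 1)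
                / ((n : ℚ) * (n + 1) ^ 3))
              * (Nat.choose (n - 1) ((n - 1) / 2) : ℚ) ^ 2 / 16 ^ ((n - 1) / 2) :=
  id3_odd_general n hn
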